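/- arXiv:2409.18074 — 3 statements merged into one kernel-verified Lean document; each statement's English description precedes it below -/
import Mathlib

section
/- Let G0(x,y) = -(3x^4 + 10x^2y^2 + 3y^4) and G1(x,y) = 4(x^2 - y^2)^2. If a, b are coprime integers, then gcd(G0(a,b), G1(a,b)) = 1 when a and b have opposite parity, and gcd(G0(a,b), G1(a,b)) = 16 when a and b are both odd. -/
/-!
From `64 (ab)² = -(4 G0 + 3 G1)`, `G1 = 4 (a² - b²)²` and the coprimality of `ab` and `a² - b²`,
the gcd of `G0 a b` and `G1 a b` divides `2⁸`. It remains to read off the power of two: `G0` is odd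
when `a`, `b` have opposite parity, while for `a`, `b` odd, writing `a² = 8s + 1`, `b² = 8r + 1` shows
that `G0` is `16` times an odd number and that `16 ∣ G1`.
-/

/-- The binary quartic form `G0(x,y) = -(3x⁴ + 10x²y² + 3y⁴)`. -/
def G0 (x y : ℤ) : ℤ := -(3*x^4 + 10*x^2*y^2 + 3*y^4)

/-- The binary quartic form `G1(x,y) = 4(x² - y²)²`. -/
def G1 (x y : ℤ) : ℤ := 4*(x^2 - y^2)^2

theorem IsCoprime.dvd_mul_of_dvd_mul_of_dvd_mul {R : Type*} [CommRing R] {d m n x y : R}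
    (hxy : IsCoprime x y) (hx : d ∣ m * x) (hy : d ∣ n * y) : d ∣ m * n := by
  obtain ⟨u, v, huv⟩ := hxy
  have : m * n = n * u * (m * x) + m * v * (n * y) := by linear_combination (-(m * n)) * huv
  rw [this]
  exact dvd_add (dvd_mul_of_dvd_right hx _) (dvd_mul_of_dvd_right hy _)

theorem IsCoprime.mul_sq_sub_sq {R : Type*} [CommRing R] {a b : R} (h : IsCoprime a b) :
    IsCoprime (a * b) (a ^ 2 - b ^ 2) := by
  refine IsCoprime.mul_left ?_ ?_
  · simpa [sub_eq_neg_add, sq] using (h.pow_right (n := 2)).neg_right.add_mul_left_right a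
  · simpa [sub_eq_add_neg, sq] using (h.symm.pow_right (n := 2)).add_mul_left_right (-b)

theorem Int.gcd_eq_two_pow {x y m : ℤ} {k n : ℕ} (hn : Int.gcd x y ∣ 2 ^ n)
    (hx : x = 2 ^ k * m) (hm : Odd m) (hy : 2 ^ k ∣ y) : Int.gcd x y = 2 ^ k := by
  have hcop : Nat.Coprime (Int.gcd x y) m.natAbs :=
    (Nat.Coprime.pow_left n (Nat.coprime_two_left.mpr (Int.natAbs_odd.mpr hm))).coprime_dvd_left hn
  refine Nat.dvd_antisymm (hcop.dvd_of_dvd_mul_right ?_) ?_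
  · simpa [hx, Int.natAbs_mul, Int.natAbs_pow] using Int.gcd_dvd_natAbs_left x y
  · exact_mod_cast Int.dvd_coe_gcd (hx ▸ dvd_mul_right _ _) hy

theorem sixty_four_mul_sq_eq_neg_G0_G1 (a b : ℤ) :
    64 * (a * b) ^ 2 = -(4 * G0 a b + 3 * G1 a b) := by
  unfold G0 G1; ring

theorem G0_comm (a b : ℤ) : G0 a b = G0 b a := by unfold G0; ring

theorem gcd_G0_G1_dvd (a b : ℤ) (hab : IsCoprime a b) : Int.gcd (G0 a b) (G1 a b) ∣ 2 ^ 8 := by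
  have h0 : (Int.gcd (G0 a b) (G1 a b) : ℤ) ∣ 64 * (a * b) ^ 2 := by
    rw [sixty_four_mul_sq_eq_neg_G0_G1]
    exact Int.dvd_neg.mpr <|
      dvd_add ((Int.gcd_dvd_left _ _).mul_left 4) ((Int.gcd_dvd_right _ _).mul_left 3)
  have h1 : (Int.gcd (G0 a b) (G1 a b) : ℤ) ∣ 4 * (a ^ 2 - b ^ 2) ^ 2 := Int.gcd_dvd_right _ _
  exact_mod_cast hab.mul_sq_sub_sq.pow.dvd_mul_of_dvd_mul_of_dvd_mul h0 h1

theorem odd_G0_of_odd_of_even {a b : ℤ} (ha : Odd a) (hb : Even b) : Odd (G0 a b) := by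
  unfold G0
  refine Odd.neg ((Odd.mul (by decide) ha.pow).add_even ?_ |>.add_even ?_)
  · exact (hb.pow_of_ne_zero two_ne_zero).mul_left _
  · exact (hb.pow_of_ne_zero four_ne_zero).mul_left _

theorem G0_eq_sixteen_mul_odd {a b : ℤ} (ha : Odd a) (hb : Odd b) :
    ∃ m, G0 a b = 2 ^ 4 * m ∧ Odd m := by
  obtain ⟨s, hs⟩ := Int.eight_dvd_sq_sub_one_of_odd ha
  obtain ⟨r, hr⟩ := Int.eight_dvd_sq_sub_one_of_odd hb
  refine ⟨-(1 + 8 * (s + r) + 12 * (s ^ 2 + r ^ 2) + 40 * s * r), ?_, ?_⟩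
  · have ha2 : a ^ 2 = 8 * s + 1 := by linarith
    have hb2 : b ^ 2 = 8 * r + 1 := by linarith
    unfold G0
    rw [show a ^ 4 = (a ^ 2) ^ 2 by ring, show b ^ 4 = (b ^ 2) ^ 2 by ring, ha2, hb2]
    ring
  · exact Odd.neg ⟨4 * (s + r) + 6 * (s ^ 2 + r ^ 2) + 20 * s * r, by ring⟩

theorem sixteen_dvd_G1 {a b : ℤ} (ha : Odd a) (hb : Odd b) : 2 ^ 4 ∣ G1 a b := by
  obtain ⟨s, hs⟩ := Int.eight_dvd_sq_sub_one_of_odd ha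
  obtain ⟨r, hr⟩ := Int.eight_dvd_sq_sub_one_of_odd hb
  exact ⟨16 * (s - r) ^ 2, by unfold G1; rw [show a ^ 2 - b ^ 2 = 8 * (s - r) by linarith]; ring⟩

theorem stmt0 (a b : ℤ) (hab : Int.gcd a b = 1) :
    (((Even a ∧ Odd b) ∨ (Odd a ∧ Even b)) → Int.gcd (G0 a b) (G1 a b) = 1) ∧
    ((Odd a ∧ Odd b) → Int.gcd (G0 a b) (G1 a b) = 16) := by
  have h256 := gcd_G0_G1_dvd a b (Int.isCoprime_iff_gcd_eq_one.mpr hab)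
  have hodd : ((Even a ∧ Odd b) ∨ (Odd a ∧ Even b)) → Odd (G0 a b) := by
    rintro (⟨ha, hb⟩ | ⟨ha, hb⟩)
    · exact G0_comm a b ▸ odd_G0_of_odd_of_even hb ha
    · exact odd_G0_of_odd_of_even ha hb
  refine ⟨fun h => ?_, fun ⟨ha, hb⟩ => ?_⟩
  · exact Int.gcd_eq_two_pow (k := 0) h256 (one_mul _).symm (hodd h) (one_dvd _)
  · obtain ⟨m, hG0, hm⟩ := G0_eq_sixteen_mul_odd ha hb
    exact Int.gcd_eq_two_pow h256 hG0 hm (sixteen_dvd_G1 ha hb)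
end

section
/- For every rational number c with c ≠ -3/4, the set {t ∈ ℚ : t^2 ≠ 1 and 3t^4 + 10t^2 + 3 + 4c(t^2 - 1)^2 = 0} (that is, the set of rational t with -(3t^4 + 10t^2 + 3)/(4(t^2 - 1)^2) = c) is either empty or has exactly 4 elements. -/
/-!
With `F(t) = 3t⁴ + 10t² + 3 + 4c(t² - 1)²`, the identity
`t₀² F(t) - t² F(t₀) = (3 + 4c)(t² - t₀²)(t²t₀² - 1)` shows that, as `3 + 4c ≠ 0`,
once the fiber contains one point `t₀` it is exactly
the orbit `{t₀, -t₀, 1/t₀, -1/t₀}` of `t₀` under `t ↦ -t` and `t ↦ 1/t`, and over `ℚ` these four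
points are distinct because `t₀ ≠ 0`, `t₀² ≠ 1` and `t₀² ≠ -1`.
-/

variable {K : Type*} [Field K]

/-- The numerator of `π(t) - c`, up to the factor `-1 / (4(t² - 1)²)`. -/
def fiberPoly (c t : K) : K := 3*t^4 + 10*t^2 + 3 + 4*c*(t^2 - 1)^2

def fiber (c : K) : Set K := {t | t^2 ≠ 1 ∧ fiberPoly c t = 0}

def kleinOrbit (t : K) : Set K := {t, -t, t⁻¹, -t⁻¹}

theorem fiberPoly_zero (c : K) : fiberPoly c 0 = 3 + 4*c := by
  simp [fiberPoly]

theorem fiberPoly_neg (c t : K) : fiberPoly c (-t) = fiberPoly c t := by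
  unfold fiberPoly
  ring

theorem fiberPoly_inv (c : K) {t : K} (ht : t ≠ 0) : fiberPoly c t⁻¹ = fiberPoly c t / t^4 := by
  unfold fiberPoly
  field_simp
  ring

theorem sq_mul_fiberPoly_sub (c t₀ t : K) :
    t₀^2 * fiberPoly c t - t^2 * fiberPoly c t₀ = (3 + 4*c) * (t^2 - t₀^2) * (t^2*t₀^2 - 1) := by
  unfold fiberPoly
  ring

theorem kleinOrbit_subset_fiber {c t₀ : K} (h : t₀ ∈ fiber c) (ht₀ : t₀ ≠ 0) :
    kleinOrbit t₀ ⊆ fiber c := by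
  obtain ⟨hsq, hzero⟩ := h
  rintro t (rfl | rfl | rfl | rfl)
  · exact ⟨hsq, hzero⟩
  · exact ⟨by rwa [neg_sq], by rwa [fiberPoly_neg]⟩
  · exact ⟨by rwa [inv_pow, inv_ne_one], by rw [fiberPoly_inv c ht₀, hzero, zero_div]⟩
  · exact ⟨by rwa [neg_sq, inv_pow, inv_ne_one],
      by rw [fiberPoly_neg, fiberPoly_inv c ht₀, hzero, zero_div]⟩

theorem fiber_subset_kleinOrbit {c t₀ : K} (hc : 3 + 4*c ≠ 0) (h : t₀ ∈ fiber c) :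
    fiber c ⊆ kleinOrbit t₀ := by
  rintro t ⟨-, ht⟩
  have hprod : (t - t₀) * (t + t₀) * ((t*t₀ - 1) * (t*t₀ + 1)) = 0 := by
    have := sq_mul_fiberPoly_sub c t₀ t
    rw [ht, h.2, mul_zero, mul_zero, sub_zero, eq_comm, mul_assoc] at this
    linear_combination (mul_eq_zero.mp this).resolve_left hc
  simp only [kleinOrbit, Set.mem_insert_iff, Set.mem_singleton_iff, mul_eq_zero,
    sub_eq_zero, add_eq_zero_iff_eq_neg] at hprod ⊢
  rcases hprod with (h | h) | h | h
  · exact .inl h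
  · exact .inr (.inl h)
  · exact .inr (.inr (.inl (eq_inv_of_mul_eq_one_left h)))
  · have : -t * t₀ = 1 := by rw [neg_mul, h, neg_neg]
    exact .inr (.inr (.inr (neg_eq_iff_eq_neg.mp (eq_inv_of_mul_eq_one_left this))))

theorem ne_zero_of_mem_fiber {c t : K} (hc : 3 + 4*c ≠ 0) (h : t ∈ fiber c) : t ≠ 0 := by
  rintro rfl
  exact hc (fiberPoly_zero c ▸ h.2)

theorem fiber_eq_kleinOrbit {c t₀ : K} (hc : 3 + 4*c ≠ 0) (h : t₀ ∈ fiber c) :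
    fiber c = kleinOrbit t₀ :=
  (fiber_subset_kleinOrbit hc h).antisymm (kleinOrbit_subset_fiber h (ne_zero_of_mem_fiber hc h))

theorem ncard_kleinOrbit (h2 : (2 : K) ≠ 0) {t : K} (ht : t ≠ 0) (h1 : t^2 ≠ 1) (hi : t^2 ≠ -1) :
    (kleinOrbit t).ncard = 4 := by
  have ne_neg : ∀ a : K, a ≠ 0 → a ≠ -a := fun a ha h ↦
    ha ((mul_eq_zero.mp (by rw [two_mul, ← eq_neg_iff_add_eq_zero]; exact h)).resolve_left h2)
  have ht_inv : t ≠ t⁻¹ := fun h ↦ h1 (by rw [sq]; nth_rw 2 [h]; exact mul_inv_cancel₀ ht)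
  have ht_neg_inv : t ≠ -t⁻¹ := fun h ↦
    hi (by rw [sq]; nth_rw 2 [h]; rw [mul_neg, mul_inv_cancel₀ ht])
  rw [kleinOrbit, Set.ncard_insert_of_notMem, Set.ncard_insert_of_notMem, Set.ncard_pair]
  · exact ne_neg _ (inv_ne_zero ht)
  · simp only [Set.mem_insert_iff, Set.mem_singleton_iff, neg_inj, not_or]
    exact ⟨fun h ↦ ht_neg_inv (neg_eq_iff_eq_neg.mp h), ht_inv⟩
  · simp only [Set.mem_insert_iff, Set.mem_singleton_iff, not_or]
    exact ⟨ne_neg t ht, ht_inv, ht_neg_inv⟩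

theorem stmt7 (c : ℚ) (hc : c ≠ -3/4) :
    {t : ℚ | t^2 ≠ 1 ∧ 3*t^4 + 10*t^2 + 3 + 4*c*(t^2 - 1)^2 = 0} = ∅ ∨
      {t : ℚ | t^2 ≠ 1 ∧ 3*t^4 + 10*t^2 + 3 + 4*c*(t^2 - 1)^2 = 0}.ncard = 4 := by
  have hc' : 3 + 4*c ≠ 0 := fun h ↦ hc (by linarith)
  change fiber c = ∅ ∨ (fiber c).ncard = 4
  rcases (fiber c).eq_empty_or_nonempty with h | ⟨t₀, ht₀⟩
  · exact .inl h
  · rw [fiber_eq_kleinOrbit hc' ht₀]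
    exact .inr (ncard_kleinOrbit two_ne_zero (ne_zero_of_mem_fiber hc' ht₀) ht₀.1
      (neg_one_lt_zero.trans_le (sq_nonneg t₀)).ne')
end

section
/- Let G0(x,y) = -(3x^4 + 10x^2y^2 + 3y^4), G1(x,y) = 4(x^2 - y^2)^2, and let H0, H1, H2 be the explicit quartic forms in (x0,x1,x2) given below. Then H0, H1, H2 are homogeneous of degree 4, have no common polynomial factor of positive degree, and for all x, y, z, w one has the polynomial identities: H0(xz, xw + yz, yw) = G1(x,y)·G1(z,w); H1(xz, xw + yz, yw) = -(G0(x,y)·G1(z,w) + G1(x,y)·G0(z,w)); H2(xz, xw + yz, yw) = G0(x,y)·G0(z,w). -/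
open MvPolynomial

/-- The quartic form `H0` in the variables `x0, x1, x2`. -/
noncomputable def H0 : MvPolynomial (Fin 3) ℤ :=
  16*(X 0)^4 - 32*(X 0)^2*(X 1)^2 + 16*(X 1)^4 + 64*(X 0)^3*(X 2) - 64*(X 0)*(X 1)^2*(X 2)
    + 96*(X 0)^2*(X 2)^2 - 32*(X 1)^2*(X 2)^2 + 64*(X 0)*(X 2)^3 + 16*(X 2)^4

/-- The quartic form `H1` in the variables `x0, x1, x2`. -/
noncomputable def H1 : MvPolynomial (Fin 3) ℤ :=
  24*(X 0)^4 + 16*(X 0)^2*(X 1)^2 + 24*(X 1)^4 - 32*(X 0)^3*(X 2) - 96*(X 0)*(X 1)^2*(X 2)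
    - 112*(X 0)^2*(X 2)^2 + 16*(X 1)^2*(X 2)^2 - 32*(X 0)*(X 2)^3 + 24*(X 2)^4

/-- The quartic form `H2` in the variables `x0, x1, x2`. -/
noncomputable def H2 : MvPolynomial (Fin 3) ℤ :=
  9*(X 0)^4 + 30*(X 0)^2*(X 1)^2 + 9*(X 1)^4 - 60*(X 0)^3*(X 2) - 36*(X 0)*(X 1)^2*(X 2)
    + 118*(X 0)^2*(X 2)^2 + 30*(X 1)^2*(X 2)^2 - 60*(X 0)*(X 2)^3 + 9*(X 2)^4

/- ### Auxiliary lemmas -/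

lemma homo_term (a : ℤ) (e f g n : ℕ) (h : e + f + g = n) :
    (C a * (X 0 ^ e * X 1 ^ f * X 2 ^ g) : MvPolynomial (Fin 3) ℤ).IsHomogeneous n := by
  subst h
  exact (((isHomogeneous_X_pow 0 e).mul (isHomogeneous_X_pow 1 f)).mul
    (isHomogeneous_X_pow 2 g)).C_mul a

lemma homoH0 : H0.IsHomogeneous 4 := by
  have e0 : H0 = C 16 * (X 0 ^ 4 * X 1 ^ 0 * X 2 ^ 0) - C 32 * (X 0 ^ 2 * X 1 ^ 2 * X 2 ^ 0)
      + C 16 * (X 0 ^ 0 * X 1 ^ 4 * X 2 ^ 0) + C 64 * (X 0 ^ 3 * X 1 ^ 0 * X 2 ^ 1)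
      - C 64 * (X 0 ^ 1 * X 1 ^ 2 * X 2 ^ 1) + C 96 * (X 0 ^ 2 * X 1 ^ 0 * X 2 ^ 2)
      - C 32 * (X 0 ^ 0 * X 1 ^ 2 * X 2 ^ 2) + C 64 * (X 0 ^ 1 * X 1 ^ 0 * X 2 ^ 3)
      + C 16 * (X 0 ^ 0 * X 1 ^ 0 * X 2 ^ 4) := by
    simp only [H0, map_ofNat]; ring
  rw [e0]
  repeat' first | apply IsHomogeneous.add | apply IsHomogeneous.sub
  all_goals apply homo_term
  all_goals norm_num

lemma homoH1 : H1.IsHomogeneous 4 := by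
  have e0 : H1 = C 24 * (X 0 ^ 4 * X 1 ^ 0 * X 2 ^ 0) + C 16 * (X 0 ^ 2 * X 1 ^ 2 * X 2 ^ 0)
      + C 24 * (X 0 ^ 0 * X 1 ^ 4 * X 2 ^ 0) - C 32 * (X 0 ^ 3 * X 1 ^ 0 * X 2 ^ 1)
      - C 96 * (X 0 ^ 1 * X 1 ^ 2 * X 2 ^ 1) - C 112 * (X 0 ^ 2 * X 1 ^ 0 * X 2 ^ 2)
      + C 16 * (X 0 ^ 0 * X 1 ^ 2 * X 2 ^ 2) - C 32 * (X 0 ^ 1 * X 1 ^ 0 * X 2 ^ 3)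
      + C 24 * (X 0 ^ 0 * X 1 ^ 0 * X 2 ^ 4) := by
    simp only [H1, map_ofNat]; ring
  rw [e0]
  repeat' first | apply IsHomogeneous.add | apply IsHomogeneous.sub
  all_goals apply homo_term
  all_goals norm_num

lemma homoH2 : H2.IsHomogeneous 4 := by
  have e0 : H2 = C 9 * (X 0 ^ 4 * X 1 ^ 0 * X 2 ^ 0) + C 30 * (X 0 ^ 2 * X 1 ^ 2 * X 2 ^ 0)
      + C 9 * (X 0 ^ 0 * X 1 ^ 4 * X 2 ^ 0) - C 60 * (X 0 ^ 3 * X 1 ^ 0 * X 2 ^ 1)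
      - C 36 * (X 0 ^ 1 * X 1 ^ 2 * X 2 ^ 1) + C 118 * (X 0 ^ 2 * X 1 ^ 0 * X 2 ^ 2)
      + C 30 * (X 0 ^ 0 * X 1 ^ 2 * X 2 ^ 2) - C 60 * (X 0 ^ 1 * X 1 ^ 0 * X 2 ^ 3)
      + C 9 * (X 0 ^ 0 * X 1 ^ 0 * X 2 ^ 4) := by
    simp only [H2, map_ofNat]; ring
  rw [e0]
  repeat' first | apply IsHomogeneous.add | apply IsHomogeneous.sub
  all_goals apply homo_term
  all_goals norm_num

/-- Cofactors certifying that `4096 * X0^8` lies in the ideal `(H0, H1, H2)`. -/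
noncomputable def A0c : MvPolynomial (Fin 3) ℤ := 0 + 138 * (X 0:MvPolynomial (Fin 3) ℤ)^0 * (X 1)^0 * (X 2)^4 + 164 * (X 0:MvPolynomial (Fin 3) ℤ)^0 * (X 1)^2 * (X 2)^2 + 147 * (X 0:MvPolynomial (Fin 3) ℤ)^0 * (X 1)^4 * (X 2)^0 - 328 * (X 0:MvPolynomial (Fin 3) ℤ)^1 * (X 1)^0 * (X 2)^3 - 588 * (X 0:MvPolynomial (Fin 3) ℤ)^1 * (X 1)^2 * (X 2)^1 - 137 * (X 0:MvPolynomial (Fin 3) ℤ)^2 * (X 1)^0 * (X 2)^2 + 224 * (X 0:MvPolynomial (Fin 3) ℤ)^2 * (X 1)^2 * (X 2)^0 - 448 * (X 0:MvPolynomial (Fin 3) ℤ)^3 * (X 1)^0 * (X 2)^1 + 256 * (X 0:MvPolynomial (Fin 3) ℤ)^4 * (X 1)^0 * (X 2)^0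

noncomputable def B0c : MvPolynomial (Fin 3) ℤ := 0 - 56 * (X 0:MvPolynomial (Fin 3) ℤ)^0 * (X 1)^0 * (X 2)^4 + 208 * (X 0:MvPolynomial (Fin 3) ℤ)^0 * (X 1)^2 * (X 2)^2 - 68 * (X 0:MvPolynomial (Fin 3) ℤ)^0 * (X 1)^4 * (X 2)^0 - 416 * (X 0:MvPolynomial (Fin 3) ℤ)^1 * (X 1)^0 * (X 2)^3 + 272 * (X 0:MvPolynomial (Fin 3) ℤ)^1 * (X 1)^2 * (X 2)^1 - 244 * (X 0:MvPolynomial (Fin 3) ℤ)^2 * (X 1)^0 * (X 2)^2 + 192 * (X 0:MvPolynomial (Fin 3) ℤ)^2 * (X 1)^2 * (X 2)^0 - 384 * (X 0:MvPolynomial (Fin 3) ℤ)^3 * (X 1)^0 * (X 2)^1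

noncomputable def C0c : MvPolynomial (Fin 3) ℤ := 0 - 96 * (X 0:MvPolynomial (Fin 3) ℤ)^0 * (X 1)^0 * (X 2)^4 + 64 * (X 0:MvPolynomial (Fin 3) ℤ)^0 * (X 1)^2 * (X 2)^2 - 80 * (X 0:MvPolynomial (Fin 3) ℤ)^0 * (X 1)^4 * (X 2)^0 - 128 * (X 0:MvPolynomial (Fin 3) ℤ)^1 * (X 1)^0 * (X 2)^3 + 320 * (X 0:MvPolynomial (Fin 3) ℤ)^1 * (X 1)^2 * (X 2)^1 - 16 * (X 0:MvPolynomial (Fin 3) ℤ)^2 * (X 1)^0 * (X 2)^2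

/-- Cofactors certifying that `256 * X1^8` lies in the ideal `(H0, H1, H2)`. -/
noncomputable def A1c : MvPolynomial (Fin 3) ℤ := 0 - 3 * (X 0:MvPolynomial (Fin 3) ℤ)^0 * (X 1)^2 * (X 2)^2 + 22 * (X 0:MvPolynomial (Fin 3) ℤ)^0 * (X 1)^4 * (X 2)^0 + 36 * (X 0:MvPolynomial (Fin 3) ℤ)^1 * (X 1)^0 * (X 2)^3 - 2 * (X 0:MvPolynomial (Fin 3) ℤ)^1 * (X 1)^2 * (X 2)^1 - 120 * (X 0:MvPolynomial (Fin 3) ℤ)^2 * (X 1)^0 * (X 2)^2 - 3 * (X 0:MvPolynomial (Fin 3) ℤ)^2 * (X 1)^2 * (X 2)^0 + 36 * (X 0:MvPolynomial (Fin 3) ℤ)^3 * (X 1)^0 * (X 2)^1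

noncomputable def B1c : MvPolynomial (Fin 3) ℤ := 0 + 8 * (X 0:MvPolynomial (Fin 3) ℤ)^0 * (X 1)^2 * (X 2)^2 - 16 * (X 0:MvPolynomial (Fin 3) ℤ)^0 * (X 1)^4 * (X 2)^0 - 24 * (X 0:MvPolynomial (Fin 3) ℤ)^1 * (X 1)^0 * (X 2)^3 + 56 * (X 0:MvPolynomial (Fin 3) ℤ)^1 * (X 1)^2 * (X 2)^1 - 48 * (X 0:MvPolynomial (Fin 3) ℤ)^2 * (X 1)^0 * (X 2)^2 + 8 * (X 0:MvPolynomial (Fin 3) ℤ)^2 * (X 1)^2 * (X 2)^0 - 24 * (X 0:MvPolynomial (Fin 3) ℤ)^3 * (X 1)^0 * (X 2)^1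

noncomputable def C1c : MvPolynomial (Fin 3) ℤ := 0 - 16 * (X 0:MvPolynomial (Fin 3) ℤ)^0 * (X 1)^2 * (X 2)^2 + 32 * (X 0:MvPolynomial (Fin 3) ℤ)^0 * (X 1)^4 * (X 2)^0 - 32 * (X 0:MvPolynomial (Fin 3) ℤ)^1 * (X 1)^2 * (X 2)^1 - 16 * (X 0:MvPolynomial (Fin 3) ℤ)^2 * (X 1)^2 * (X 2)^0

lemma cert0 : A0c * H0 + B0c * H1 + C0c * H2 = C 4096 * X 0 ^ 8 := by
  simp only [A0c, B0c, C0c, H0, H1, H2, map_ofNat]; ring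

lemma cert1 : A1c * H0 + B1c * H1 + C1c * H2 = C 256 * X 1 ^ 8 := by
  simp only [A1c, B1c, C1c, H0, H1, H2, map_ofNat]; ring

lemma degreeOf_le_of_dvd {p q : MvPolynomial (Fin 3) ℤ} (i : Fin 3) (h : p ∣ q) (hq : q ≠ 0) :
    p.degreeOf i ≤ q.degreeOf i := by
  obtain ⟨r, rfl⟩ := h
  have hp : p ≠ 0 := fun h0 => hq (by simp [h0])
  have hr : r ≠ 0 := fun h0 => hq (by simp [h0])
  have key : ∀ f : MvPolynomial (Fin 3) ℤ,
      f.degreeOf i = (rename (Equiv.swap i (0 : Fin 3)) f).degreeOf 0 := by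
    intro f
    rw [← degreeOf_rename_of_injective (Equiv.swap i (0 : Fin 3)).injective i,
      Equiv.swap_apply_left]
  rw [key p, key (p * r), map_mul]
  set P := rename (Equiv.swap i (0 : Fin 3)) p with hP
  set R := rename (Equiv.swap i (0 : Fin 3)) r with hR
  have hP0 : P ≠ 0 := fun h0 =>
    hp (rename_injective _ (Equiv.swap i (0 : Fin 3)).injective (by simpa [hP] using h0))
  have hR0 : R ≠ 0 := fun h0 =>
    hr (rename_injective _ (Equiv.swap i (0 : Fin 3)).injective (by simpa [hR] using h0))
  rw [← natDegree_finSuccEquiv (n := 2) P, ← natDegree_finSuccEquiv (n := 2) (P * R), map_mul,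
    Polynomial.natDegree_mul (by simpa using hP0) (by simpa using hR0)]
  exact Nat.le_add_right _ _

lemma degreeOf_C_mul_X_pow_ne (a : ℤ) {i j : Fin 3} (h : j ≠ i) (n : ℕ) :
    degreeOf j (C a * X i ^ n : MvPolynomial (Fin 3) ℤ) = 0 := by
  refine Nat.eq_zero_of_le_zero (le_trans (degreeOf_mul_le _ _ _) ?_)
  rw [degreeOf_C]
  have hX : degreeOf j (X i : MvPolynomial (Fin 3) ℤ) = 0 := by
    rw [degreeOf_X]; simp [h]
  simpa [hX] using degreeOf_pow_le j (X i : MvPolynomial (Fin 3) ℤ) n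

lemma ne_zero_C_mul_X_pow (a : ℤ) (ha : a ≠ 0) (i : Fin 3) (n : ℕ) :
    (C a * X i ^ n : MvPolynomial (Fin 3) ℤ) ≠ 0 := by
  intro h
  have := congrArg (eval (fun _ => (1 : ℤ))) h
  simp [ha] at this

theorem stmt12 :
    (H0.IsHomogeneous 4 ∧ H1.IsHomogeneous 4 ∧ H2.IsHomogeneous 4) ∧
    (∀ p : MvPolynomial (Fin 3) ℤ, p ∣ H0 → p ∣ H1 → p ∣ H2 → p.totalDegree = 0) ∧
    (∀ x y z w : ℤ,
      eval ![x*z, x*w + y*z, y*w] H0 = G1 x y * G1 z w ∧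
      eval ![x*z, x*w + y*z, y*w] H1 = -(G0 x y * G1 z w + G1 x y * G0 z w) ∧
      eval ![x*z, x*w + y*z, y*w] H2 = G0 x y * G0 z w) := by
  refine ⟨⟨homoH0, homoH1, homoH2⟩, ?_, ?_⟩
  · intro p h0 h1 h2
    have hd0 : p ∣ C (4096 : ℤ) * X 0 ^ 8 := by
      rw [← cert0]
      exact dvd_add (dvd_add (Dvd.dvd.mul_left h0 _) (Dvd.dvd.mul_left h1 _))
        (Dvd.dvd.mul_left h2 _)
    have hd1 : p ∣ C (256 : ℤ) * X 1 ^ 8 := by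
      rw [← cert1]
      exact dvd_add (dvd_add (Dvd.dvd.mul_left h0 _) (Dvd.dvd.mul_left h1 _))
        (Dvd.dvd.mul_left h2 _)
    have e0 : p.degreeOf 0 = 0 := Nat.eq_zero_of_le_zero <|
      (degreeOf_le_of_dvd 0 hd1 (ne_zero_C_mul_X_pow 256 (by norm_num) 1 8)).trans_eq
        (degreeOf_C_mul_X_pow_ne 256 (by decide) 8)
    have e1 : p.degreeOf 1 = 0 := Nat.eq_zero_of_le_zero <|
      (degreeOf_le_of_dvd 1 hd0 (ne_zero_C_mul_X_pow 4096 (by norm_num) 0 8)).trans_eq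
        (degreeOf_C_mul_X_pow_ne 4096 (by decide) 8)
    have e2 : p.degreeOf 2 = 0 := Nat.eq_zero_of_le_zero <|
      (degreeOf_le_of_dvd 2 hd0 (ne_zero_C_mul_X_pow 4096 (by norm_num) 0 8)).trans_eq
        (degreeOf_C_mul_X_pow_ne 4096 (by decide) 8)
    rw [MvPolynomial.totalDegree]
    refine Nat.eq_zero_of_le_zero (Finset.sup_le fun m hm => ?_)
    have hz : ∀ j, m j = 0 := fun j => Nat.eq_zero_of_le_zero <|
      le_trans (monomial_le_degreeOf j hm) (by fin_cases j <;> simp [e0, e1, e2])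
    have : m = 0 := Finsupp.ext hz
    simp [this]
  · intro x y z w
    refine ⟨?_, ?_, ?_⟩ <;> simp [H0, H1, H2, G0, G1] <;> ring
end
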